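/- If G is a Tutte-Berge simple graph such that the induced subgraph on D(G) has no isolated vertices, then D(G) = ∅ and G has a perfect matching. -/

import Mathlib

open Finset

namespace TB

variable {V W : Type*}

/-- A matching of `G` given as a finite set of edges: each element is an edge of `G`
and no two distinct edges share a vertex. -/
def IsMatching (G : SimpleGraph V) (M : Finset (Sym2 V)) : Prop :=
  (∀ e ∈ M, e ∈ G.edgeSet) ∧
    ∀ e ∈ M, ∀ f ∈ M, e ≠ f → ∀ v : V, v ∈ e → v ∉ f

/-- A perfect matching: a matching covering every vertex. -/
def IsPerfectMatching (G : SimpleGraph V) (M : Finset (Sym2 V)) : Prop :=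
  IsMatching G M ∧ ∀ v : V, ∃ e ∈ M, v ∈ e

/-- The matching number `mat(G)`: the maximum size of a matching of `G`. -/
noncomputable def matchingNumber (G : SimpleGraph V) [Fintype V] : ℕ := by
  classical
  exact Finset.univ.powerset.sup fun M => if IsMatching G M then M.card else 0

/-- `T` is an independent set of `G`. -/
def IsIndepSet (G : SimpleGraph V) (T : Finset V) : Prop :=
  ∀ u ∈ T, ∀ v ∈ T, ¬ G.Adj u v

/-- The neighborhood `N_G(T)` of a set of vertices `T`. -/
noncomputable def nbrSet (G : SimpleGraph V) [Fintype V] (T : Finset V) : Finset V := by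
  classical
  exact Finset.univ.filter fun v => ∃ t ∈ T, G.Adj t v

/-- `G` is a Tutte-Berge graph: some independent set `T` satisfies
`|T| = |N_G(T)| + |V(G)| - 2 mat(G)` (written additively to avoid truncated subtraction). -/
noncomputable def TutteBerge (G : SimpleGraph V) [Fintype V] : Prop :=
  ∃ T : Finset V, IsIndepSet G T ∧
    T.card + 2 * matchingNumber G = (nbrSet G T).card + Fintype.card V

/-- `G` is factor-critical: deleting any vertex leaves a graph with a perfect matching. -/
def FactorCritical (G : SimpleGraph V) : Prop :=
  ∀ v : V, ∃ M, IsPerfectMatching (G.induce {x | x ≠ v}) M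

/-- The Gallai-Edmonds set `D(G)`: vertices missed by at least one maximum matching. -/
noncomputable def gallaiD (G : SimpleGraph V) [Fintype V] : Finset V := by
  classical
  exact Finset.univ.filter fun v =>
    ∃ M, IsMatching G M ∧ M.card = matchingNumber G ∧ ∀ e ∈ M, v ∉ e

/-- The cone `G*` over `G`: a new apex vertex (`none`) joined to every vertex of `G`. -/
def cone (G : SimpleGraph V) : SimpleGraph (Option V) :=
  SimpleGraph.fromRel fun a b =>
    a = none ∨ ∃ u v, a = some u ∧ b = some v ∧ G.Adj u v

/-- The edge polytope `P_H`: convex hull of the points `e_u + e_v` over edges `{u,v}` of `H`. -/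
noncomputable def edgePolytope (H : SimpleGraph W) : Set (W → ℝ) := by
  classical
  exact convexHull ℝ
    {x | ∃ u v, H.Adj u v ∧
      x = fun w => (if w = u then (1 : ℝ) else 0) + (if w = v then (1 : ℝ) else 0)}

/-- Every connected component of `H` contains an odd cycle. -/
def HasOddCycleComponents (H : SimpleGraph W) : Prop :=
  ∀ c : H.ConnectedComponent, ∃ u, u ∈ c.supp ∧ ∃ p : H.Walk u u, p.IsCycle ∧ Odd p.length

/-- The neighborhood of a set of vertices, as a set. -/
def nbrSetSet (H : SimpleGraph W) (T : Set W) : Set W := {w | ∃ t ∈ T, H.Adj t w}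

/-- The bipartite graph `B_H(T)` induced by `T`: vertex set `T ∪ N_H(T)`,
with the edges of `H` joining a vertex of `T` to a vertex of `N_H(T)`. -/
def inducedBipartite (H : SimpleGraph W) (T : Set W) :
    SimpleGraph ↥(T ∪ nbrSetSet H T) :=
  SimpleGraph.fromRel fun a b => (a : W) ∈ T ∧ H.Adj a b

/-- An independent set `T` is fundamental in `H` if `B_H(T)` is connected (trivially so
if empty) and, when `T ∪ N_H(T) ≠ V(H)`, each connected component of
`H \ (T ∪ N_H(T))` contains an odd cycle. -/
def Fundamental (H : SimpleGraph W) (T : Set W) : Prop :=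
  (∀ u ∈ T, ∀ v ∈ T, ¬ H.Adj u v) ∧
  (inducedBipartite H T).Preconnected ∧
  (T ∪ nbrSetSet H T ≠ Set.univ →
    HasOddCycleComponents (H.induce (T ∪ nbrSetSet H T)ᶜ))



section Aux

open scoped Classical

lemma exists_max_matching {V : Type*} [Fintype V] (G : SimpleGraph V) :
    ∃ M : Finset (Sym2 V), IsMatching G M ∧ M.card = matchingNumber G := by
  classical
  obtain ⟨M, hMmem, hMval⟩ := Finset.exists_mem_eq_sup ((Finset.univ (α := Sym2 V)).powerset)
    ⟨∅, by simp⟩ (fun M => if IsMatching G M then M.card else 0)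
  by_cases h : IsMatching G M
  · exact ⟨M, h, by simp only [matchingNumber, hMval, if_pos h]⟩
  · refine ⟨∅, ⟨by simp, by simp⟩, ?_⟩
    simp only [matchingNumber, hMval, if_neg h, Finset.card_empty]

lemma card_le_matchingNumber {V : Type*} [Fintype V] {G : SimpleGraph V}
    {M : Finset (Sym2 V)} (hM : IsMatching G M) : M.card ≤ matchingNumber G := by
  classical
  have h := Finset.le_sup (f := fun M => if IsMatching G M then M.card else 0)
    (Finset.mem_powerset.2 (Finset.subset_univ M))
  simpa only [matchingNumber, if_pos hM] using h

lemma card_covered {V : Type*} [Fintype V] (G : SimpleGraph V)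
    (M : Finset (Sym2 V)) (hM : IsMatching G M) :
    (Finset.univ.filter fun w => ∃ e ∈ M, w ∈ e).card = 2 * M.card := by
  classical
  have hrw : (Finset.univ.filter fun w => ∃ e ∈ M, w ∈ e)
      = M.biUnion (fun e => Finset.univ.filter (· ∈ e)) := by
    ext w; simp
  rw [hrw, Finset.card_biUnion]
  · have h2 : ∀ e ∈ M, (Finset.univ.filter (· ∈ e)).card = 2 := by
      intro e he
      induction e using Sym2.ind with
      | _ a b =>
        have hadj : G.Adj a b := (SimpleGraph.mem_edgeSet G).1 (hM.1 _ he)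
        have hne : a ≠ b := G.ne_of_adj hadj
        have : (Finset.univ.filter (· ∈ s(a, b))) = {a, b} := by
          ext w; simp [Sym2.mem_iff]
        rw [this, Finset.card_insert_of_notMem (by simp [hne]), Finset.card_singleton]
    rw [Finset.sum_congr rfl h2, Finset.sum_const, smul_eq_mul, mul_comm]
  · intro e he f hf hef
    rw [Function.onFun, Finset.disjoint_left]
    intro w hw hw'
    exact hM.2 e he f hf hef w (Finset.mem_filter.1 hw).2 (Finset.mem_filter.1 hw').2

/-- Key counting lemma: if `T` witnesses the Tutte-Berge condition, then any vertex
missed by a maximum matching lies in `T`. -/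
lemma missed_mem_T {V : Type*} [Fintype V] (G : SimpleGraph V) (T : Finset V)
    (hind : IsIndepSet G T)
    (hT : T.card + 2 * matchingNumber G = (nbrSet G T).card + Fintype.card V)
    (M : Finset (Sym2 V)) (hM : IsMatching G M) (hcard : M.card = matchingNumber G)
    (v : V) (hv : ∀ e ∈ M, v ∉ e) : v ∈ T := by
  classical
  set S := nbrSet G T with hS
  set cov : Finset V := Finset.univ.filter (fun w => ∃ e ∈ M, w ∈ e) with hcov
  -- S and T are disjoint
  have hST : ∀ s ∈ S, s ∉ T := by
    intro s hs hsT
    simp only [hS, nbrSet, Finset.mem_filter] at hs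
    obtain ⟨-, t, ht, hadj⟩ := hs
    exact hind t ht s hsT hadj
  -- each edge of M containing a vertex of T has its other endpoint in S
  have hedge : ∀ e ∈ M, ∀ t ∈ T, t ∈ e → ∃ s, s ∈ S ∧ e = s(t, s) := by
    intro e he t ht hte
    induction e using Sym2.ind with
    | _ a b =>
      have hadj : G.Adj a b := (SimpleGraph.mem_edgeSet G).1 (hM.1 _ he)
      rcases Sym2.mem_iff.1 hte with rfl | rfl
      · refine ⟨b, ?_, rfl⟩
        simp only [hS, nbrSet, Finset.mem_filter]
        exact ⟨Finset.mem_univ _, t, ht, hadj⟩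
      · refine ⟨a, ?_, Sym2.eq_swap⟩
        simp only [hS, nbrSet, Finset.mem_filter]
        exact ⟨Finset.mem_univ _, t, ht, hadj.symm⟩
  -- injection from covered T-vertices into S
  have hchoice : ∀ t ∈ T ∩ cov, ∃ s, s ∈ S ∧ s(t, s) ∈ M := by
    intro t ht
    rw [Finset.mem_inter] at ht
    obtain ⟨e, he, hte⟩ := (Finset.mem_filter.1 ht.2).2
    obtain ⟨s, hsS, rfl⟩ := hedge e he t ht.1 hte
    exact ⟨s, hsS, he⟩
  have hcovT : (T ∩ cov).card ≤ S.card := by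
    have := Finset.card_le_card_of_injOn
      (f := fun t => if h : ∃ s, s ∈ S ∧ s(t, s) ∈ M then h.choose else t)
      (s := T ∩ cov) (t := S) ?_ ?_
    · exact this
    · intro t ht
      have h := hchoice t ht
      simp only [dif_pos h]
      exact h.choose_spec.1
    · intro t1 ht1 t2 ht2 heq
      by_contra hne
      have h1 := hchoice t1 ht1
      have h2 := hchoice t2 ht2
      simp only [dif_pos h1, dif_pos h2] at heq
      set s1 := h1.choose with hs1
      have he1 : s(t1, s1) ∈ M := h1.choose_spec.2
      have he2 : s(t2, s1) ∈ M := by rw [heq]; exact h2.choose_spec.2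
      have hT1 : t1 ∈ T := (Finset.mem_inter.1 ht1).1
      have hT2 : t2 ∈ T := (Finset.mem_inter.1 ht2).1
      have hedne : s(t1, s1) ≠ s(t2, s1) := by
        intro h
        rw [Sym2.eq_iff] at h
        rcases h with ⟨h12, -⟩ | ⟨hts, -⟩
        · exact hne h12
        · exact hST s1 h1.choose_spec.1 (hts ▸ hT1)
      exact hM.2 _ he1 _ he2 hedne s1 (Sym2.mem_mk_right _ _) (Sym2.mem_mk_right _ _)
  -- counting
  have hcovcard : cov.card = 2 * M.card := card_covered G M hM
  have hsplit : (T ∩ cov).card + (T \ cov).card = T.card :=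
    Finset.card_inter_add_card_sdiff T cov
  have huniv : cov.card + (Finset.univ \ cov).card = Fintype.card V := by
    rw [Finset.card_sdiff_of_subset (Finset.subset_univ cov), Finset.card_univ]
    exact Nat.add_sub_cancel' (by
      rw [← Finset.card_univ]; exact Finset.card_le_card (Finset.subset_univ cov))
  have hTsub : T \ cov ⊆ Finset.univ \ cov := by
    intro x hx
    rw [Finset.mem_sdiff] at hx ⊢
    exact ⟨Finset.mem_univ _, hx.2⟩
  have hmissed : (Finset.univ \ cov).card ≤ (T \ cov).card := by
    have hTsubcard : (T \ cov).card ≤ (Finset.univ \ cov).card := Finset.card_le_card hTsub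
    omega
  have heq : Finset.univ \ cov = T \ cov :=
    (Finset.eq_of_subset_of_card_le hTsub hmissed).symm
  have hvmem : v ∈ Finset.univ \ cov := by
    rw [Finset.mem_sdiff]
    refine ⟨Finset.mem_univ _, ?_⟩
    rw [hcov, Finset.mem_filter]
    rintro ⟨-, e, he, hve⟩
    exact hv e he hve
  rw [heq, Finset.mem_sdiff] at hvmem
  exact hvmem.1

end Aux

/-- if `G` is Tutte-Berge and the induced subgraph on `D(G)` has no isolated
vertices, then `D(G) = ∅` and `G` has a perfect matching. -/
theorem gallaiD_empty_of_no_isolated {V : Type*} [Fintype V] (G : SimpleGraph V)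
    (hG : TutteBerge G)
    (hniso : ∀ v ∈ gallaiD G, ∃ u ∈ gallaiD G, G.Adj v u) :
    gallaiD G = ∅ ∧ ∃ M, IsPerfectMatching G M := by
  classical
  obtain ⟨T, hind, hT⟩ := hG
  have hDT : ∀ v ∈ gallaiD G, v ∈ T := by
    intro v hv
    simp only [gallaiD, Finset.mem_filter, Finset.mem_univ, true_and] at hv
    obtain ⟨M, hM, hMcard, hmiss⟩ := hv
    exact missed_mem_T G T hind hT M hM hMcard v hmiss
  have hD : gallaiD G = ∅ := by
    by_contra h
    obtain ⟨v, hv⟩ := Finset.nonempty_of_ne_empty h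
    obtain ⟨u, hu, hadj⟩ := hniso v hv
    exact hind v (hDT v hv) u (hDT u hu) hadj
  refine ⟨hD, ?_⟩
  obtain ⟨M, hM, hMcard⟩ := exists_max_matching G
  refine ⟨M, hM, ?_⟩
  intro v
  by_contra h
  push_neg at h
  have : v ∈ gallaiD G := by
    simp only [gallaiD, Finset.mem_filter, Finset.mem_univ, true_and]
    exact ⟨M, hM, hMcard, h⟩
  rw [hD] at this
  exact absurd this (Finset.notMem_empty v)

end TB
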